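/- arXiv:2210.17493 — 5 statements merged into one kernel-verified Lean document; each statement's English description precedes it below -/
import Mathlib

section
/- Let p be an odd prime, n ≥ 1, and let A ⊆ 𝔽_p^n be the zero set of the quadratic form x ↦ xᵀx. Let Ψ = (ψ₁,…,ψ_t) be a system of 𝔽_p-linear forms, each mapping (𝔽_p^n)^D → 𝔽_p^n, and let k be the dimension of the 𝔽_p-span of the quadratic functions x ↦ ψᵢ(x)ᵀψᵢ(x) on (𝔽_p^n)^D for i = 1,…,t. Then |T_Ψ(1_A) − p^{−k}| ≤ p^{−n/2}. -/
open Finset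

/-- The solution-counting operator `T_Ψ(f)` for the system of linear forms
`ψ_i(x_1,…,x_D) = ∑_d c i d • x_d`. -/
noncomputable def linT {p : ℕ} [NeZero p] {t D : ℕ} (n : ℕ)
    (c : Fin t → Fin D → ZMod p) (f : (Fin n → ZMod p) → ℂ) : ℂ :=
  ((p : ℂ) ^ (n * D))⁻¹ * ∑ x : Fin D → Fin n → ZMod p,
    ∏ i : Fin t, f (fun j => ∑ d, c i d * x d j)

/-!
Expanding each indicator `1[q = 0] = p⁻¹ ∑_λ e(λ q)` turns `T_Ψ(1_A)` into an average over
`λ ∈ 𝔽_p^t` of character sums of `∑ λᵢ ψᵢ(x)ᵀψᵢ(x)`. The `λ` for which this combination vanishes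
identically form a subspace of codimension `k` and give the main term `p^{-k}`. For every other
`λ` the combination splits over the `n` coordinates as `n` copies of a nonzero quadratic form
`Q_λ` on `𝔽_p^D`, so the character sum is a Gauss sum raised to the `n`-th power. Squaring a
Gauss sum and substituting `z = y + h` leaves a sum over the radical of `Q_λ`, which is a proper
subspace when `p` is odd; hence each Gauss sum has modulus at most `p^{D - 1/2}`.
-/

lemma AddChar.map_finset_sum {ι A M : Type*} [AddCommMonoid A] [CommMonoid M] (ψ : AddChar A M)
    (s : Finset ι) (f : ι → A) : ψ (∑ i ∈ s, f i) = ∏ i ∈ s, ψ (f i) := by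
  classical
  induction s using Finset.induction_on with
  | empty => simp
  | insert a s ha ih => rw [sum_insert ha, prod_insert ha, AddChar.map_add_eq_mul, ih]

lemma QuadraticMap.map_add_eq_add_polarBilin {R M N : Type*} [CommRing R] [AddCommGroup M]
    [Module R M] [AddCommGroup N] [Module R N] (Q : QuadraticMap R M N) (y h : M) :
    Q (y + h) = Q y + (Q h + Q.polarBilin h y) := by
  rw [polarBilin_apply_apply, polar, add_comm h y]
  abel

section GaussSum

variable {F V : Type*} [Field F] [AddCommGroup V] [Module F V] [Fintype V] {ψ : AddChar F ℂ}

lemma AddChar.sum_linearMap_eq_ite [DecidableEq (V →ₗ[F] F)] (hψ : ψ ≠ 1) (L : V →ₗ[F] F) :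
    ∑ v, ψ (L v) = if L = 0 then (Fintype.card V : ℂ) else 0 := by
  split_ifs with hL
  · simp [hL]
  obtain ⟨v₀, hv₀⟩ : ∃ v₀, L v₀ ≠ 0 := by
    by_contra! h
    exact hL (LinearMap.ext h)
  obtain ⟨b, hb⟩ := AddChar.ne_one_iff.mp hψ
  let χ : AddChar V ℂ := ψ.compAddMonoidHom L.toAddMonoidHom
  have hχ : χ ≠ 1 := AddChar.ne_one_iff.mpr ⟨(b / L v₀) • v₀, by simpa [χ, hv₀] using hb⟩
  exact AddChar.sum_eq_zero_of_ne_one hχ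

variable [Fintype F]

open Classical in
lemma sum_addChar_quadraticMap_mul_conj (hψ : ψ ≠ 1) (Q : QuadraticMap F V F) :
    (∑ v, ψ (Q v)) * starRingEnd ℂ (∑ v, ψ (Q v))
      = Fintype.card V * ∑ h : LinearMap.ker Q.polarBilin, ψ (Q h) := by
  calc (∑ v, ψ (Q v)) * starRingEnd ℂ (∑ v, ψ (Q v))
      = ∑ y, ∑ h, ψ (Q (y + h)) * ψ (-Q y) := by
        simp_rw [map_sum, ← AddChar.map_neg_eq_conj, sum_mul_sum]
        rw [sum_comm]
        exact sum_congr rfl fun y _ => (Fintype.sum_equiv (Equiv.addLeft y) _ _ fun _ => rfl).symm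
    _ = ∑ h, ψ (Q h) * ∑ y, ψ (Q.polarBilin h y) := by
        rw [sum_comm]
        refine sum_congr rfl fun h _ => ?_
        rw [mul_sum]
        refine sum_congr rfl fun y _ => ?_
        rw [← AddChar.map_add_eq_mul, ← AddChar.map_add_eq_mul, Q.map_add_eq_add_polarBilin]
        congr 1
        ring
    _ = Fintype.card V * ∑ h : LinearMap.ker Q.polarBilin, ψ (Q h) := by
        simp_rw [AddChar.sum_linearMap_eq_ite hψ, mul_ite, mul_zero, ← sum_filter]
        rw [← sum_mul, mul_comm]
        exact congrArg _ (sum_subtype _ (fun h => by simp) _)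

lemma norm_sq_sum_addChar_quadraticMap_le (hψ : ψ ≠ 1) (Q : QuadraticMap F V F) :
    ‖∑ v, ψ (Q v)‖ ^ 2 ≤ Fintype.card V * Nat.card (LinearMap.ker Q.polarBilin) := by
  classical
  have hsq : ‖∑ v, ψ (Q v)‖ ^ 2 = ‖(∑ v, ψ (Q v)) * starRingEnd ℂ (∑ v, ψ (Q v))‖ := by
    rw [norm_mul, Complex.norm_conj, sq]
  rw [hsq, sum_addChar_quadraticMap_mul_conj hψ, norm_mul, Complex.norm_natCast,
    Nat.card_eq_fintype_card]
  gcongr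
  exact (norm_sum_le _ _).trans (by simp [AddChar.norm_apply])

lemma QuadraticMap.card_ker_polarBilin_mul_card_le (h2 : (2 : F) ≠ 0) {Q : QuadraticMap F V F}
    (hQ : Q ≠ 0) : Nat.card (LinearMap.ker Q.polarBilin) * Fintype.card F ≤ Fintype.card V := by
  have hker : LinearMap.ker Q.polarBilin ≠ ⊤ := by
    intro htop
    refine hQ (QuadraticMap.ext fun x => ?_)
    have hx : polar Q x x = 0 := by
      simpa using LinearMap.congr_fun (LinearMap.congr_fun (LinearMap.ker_eq_top.mp htop) x) x
    rw [polar_self, nsmul_eq_mul, Nat.cast_ofNat] at hx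
    simpa [h2] using hx
  rw [Module.natCard_eq_pow_finrank (K := F), Nat.card_eq_fintype_card,
    Module.card_eq_pow_finrank (K := F) (V := V), ← pow_succ]
  exact Nat.pow_le_pow_right Fintype.card_pos (Submodule.finrank_lt hker)

lemma norm_sum_addChar_quadraticMap_le (h2 : (2 : F) ≠ 0) (hψ : ψ ≠ 1)
    {Q : QuadraticMap F V F} (hQ : Q ≠ 0) :
    ‖∑ v, ψ (Q v)‖ ≤ Fintype.card V / √(Fintype.card F) := by
  have hF : (0 : ℝ) < Fintype.card F := by exact_mod_cast Fintype.card_pos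
  have hsq : ‖∑ v, ψ (Q v)‖ ^ 2 * Fintype.card F ≤ (Fintype.card V : ℝ) ^ 2 := by
    calc ‖∑ v, ψ (Q v)‖ ^ 2 * Fintype.card F
        ≤ Fintype.card V * Nat.card (LinearMap.ker Q.polarBilin) * Fintype.card F := by
          gcongr
          exact norm_sq_sum_addChar_quadraticMap_le hψ Q
      _ ≤ Fintype.card V * Fintype.card V := by
          rw [mul_assoc]
          gcongr
          exact_mod_cast Q.card_ker_polarBilin_mul_card_le h2 hQ
      _ = (Fintype.card V : ℝ) ^ 2 := (sq _).symm
  rw [le_div_iff₀ (Real.sqrt_pos.mpr hF)]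
  refine pow_le_pow_iff_left₀ (by positivity) (by positivity) two_ne_zero |>.mp ?_
  rwa [mul_pow, Real.sq_sqrt hF.le]

end GaussSum

section CommonZeros

variable {F X ι : Type*} [Field F] [Fintype F] [DecidableEq F] [Fintype X] [Fintype ι]
  [DecidableEq ι] {ψ : AddChar F ℂ}

lemma ite_eq_zero_eq_inv_card_mul_sum_addChar (hψ : ψ ≠ 1) (a : F) :
    (if a = 0 then 1 else 0 : ℂ) = (Fintype.card F : ℂ)⁻¹ * ∑ l, ψ (l * a) := by
  rw [AddChar.sum_mulShift a (AddChar.IsPrimitive.of_ne_one hψ)]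
  split_ifs
  · exact (inv_mul_cancel₀ (by exact_mod_cast Fintype.card_ne_zero)).symm
  · simp

lemma sum_prod_ite_eq_zero_eq_sum_addChar (hψ : ψ ≠ 1) (q : ι → X → F) :
    ∑ x, ∏ i, (if q i x = 0 then 1 else 0 : ℂ)
      = (Fintype.card F : ℂ)⁻¹ ^ Fintype.card ι
        * ∑ l : ι → F, ∑ x, ψ (Fintype.linearCombination F q l x) := by
  simp_rw [ite_eq_zero_eq_inv_card_mul_sum_addChar hψ, prod_mul_distrib, prod_const, card_univ,
    Fintype.prod_sum, ← mul_sum]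
  rw [sum_comm]
  simp [Fintype.linearCombination_apply, AddChar.map_finset_sum]

noncomputable def commonZeroDensity (q : ι → X → F) : ℂ :=
  (Fintype.card X : ℂ)⁻¹ * ∑ x, ∏ i, (if q i x = 0 then 1 else 0 : ℂ)

lemma commonZeroDensity_eq [Nonempty X] (hψ : ψ ≠ 1) (q : ι → X → F) :
    commonZeroDensity q
      = ((Fintype.card F : ℂ) ^ Module.finrank F (Submodule.span F (Set.range q)))⁻¹
        + ((Fintype.card F : ℂ) ^ Fintype.card ι * Fintype.card X)⁻¹
          * ∑ l with Fintype.linearCombination F q l ≠ 0,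
              ∑ x, ψ (Fintype.linearCombination F q l x) := by
  classical
  set φ := Fintype.linearCombination F q
  have hrank : Module.finrank F (Submodule.span F (Set.range q))
      + Module.finrank F (LinearMap.ker φ) = Fintype.card ι := by
    rw [← Fintype.range_linearCombination, LinearMap.finrank_range_add_finrank_ker,
      Module.finrank_fintype_fun_eq_card]
  have hker : #{l | φ l = 0} = Fintype.card F ^ Module.finrank F (LinearMap.ker φ) := by
    rw [← Module.card_eq_pow_finrank, ← Fintype.card_subtype]
    exact Fintype.card_congr (Equiv.subtypeEquivRight fun l => LinearMap.mem_ker.symm)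
  have hsum_ker : ∑ l with φ l = 0, ∑ x, ψ (φ l x) = #{l | φ l = 0} * Fintype.card X := by
    have hterm : ∀ l ∈ ({l | φ l = 0} : Finset (ι → F)), ∑ x, ψ (φ l x) = Fintype.card X := by
      intro l hl
      simp [(mem_filter.mp hl).2]
    rw [sum_congr rfl hterm, sum_const, nsmul_eq_mul]
  rw [commonZeroDensity, sum_prod_ite_eq_zero_eq_sum_addChar hψ,
    ← sum_filter_add_sum_filter_not _ (fun l => φ l = 0),
    hsum_ker, hker, ← hrank]
  have hF : (Fintype.card F : ℂ) ≠ 0 := by exact_mod_cast Fintype.card_ne_zero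
  have hX : (Fintype.card X : ℂ) ≠ 0 := by exact_mod_cast Fintype.card_ne_zero
  push_cast
  rw [inv_pow, pow_add]
  field_simp
  ring

lemma norm_commonZeroDensity_sub_le [Nonempty X] (hψ : ψ ≠ 1) (q : ι → X → F)
    {B : ℝ} (hB₀ : 0 ≤ B) (hB : ∀ l, Fintype.linearCombination F q l ≠ 0 →
      ‖∑ x, ψ (Fintype.linearCombination F q l x)‖ ≤ B) :
    ‖commonZeroDensity q
        - ((Fintype.card F : ℂ) ^ Module.finrank F (Submodule.span F (Set.range q)))⁻¹‖
      ≤ B / Fintype.card X := by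
  rw [commonZeroDensity_eq hψ, add_sub_cancel_left, norm_mul, norm_inv, norm_mul,
    norm_pow, Complex.norm_natCast, Complex.norm_natCast]
  have hsum : ‖∑ l with Fintype.linearCombination F q l ≠ 0,
      ∑ x, ψ (Fintype.linearCombination F q l x)‖ ≤ Fintype.card F ^ Fintype.card ι * B := by
    refine (norm_sum_le _ _).trans <|
      (sum_le_card_nsmul _ _ B fun l hl => hB l (mem_filter.mp hl).2).trans ?_
    rw [nsmul_eq_mul]
    gcongr
    exact_mod_cast (card_filter_le _ _).trans_eq (by simp)
  calc ((Fintype.card F : ℝ) ^ Fintype.card ι * Fintype.card X)⁻¹ * ‖_‖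
      ≤ ((Fintype.card F : ℝ) ^ Fintype.card ι * Fintype.card X)⁻¹
        * (Fintype.card F ^ Fintype.card ι * B) := by gcongr
    _ = B / Fintype.card X := by
        have hF : (Fintype.card F : ℝ) ≠ 0 := by exact_mod_cast Fintype.card_ne_zero
        field_simp

end CommonZeros

section SumsOfSquares

variable {R ι κ J : Type*} [CommRing R] [Fintype ι] [Fintype κ] [Fintype J] (c : ι → κ → R)

def sqCombination (l : ι → R) : QuadraticMap R (κ → R) R :=
  (QuadraticMap.weightedSumSquares R l).comp (Matrix.of c).mulVecLin

lemma sqCombination_apply (l : ι → R) (y : κ → R) :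
    sqCombination c l y = ∑ i, l i * (∑ d, c i d * y d) ^ 2 := by
  simp [sqCombination, Matrix.mulVec, dotProduct, sq]

def normSqForm (i : ι) (x : κ → J → R) : R := ∑ j, (∑ d, c i d * x d j) ^ 2

lemma linearCombination_normSqForm_apply (l : ι → R) (x : κ → J → R) :
    Fintype.linearCombination R (normSqForm c) l x = ∑ j, sqCombination c l (fun d => x d j) := by
  simp only [Fintype.linearCombination_apply, Finset.sum_apply, Pi.smul_apply, smul_eq_mul,
    normSqForm, sqCombination_apply, mul_sum]
  exact sum_comm

lemma linearCombination_normSqForm_eq_zero {l : ι → R} (hl : sqCombination c l = 0) :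
    Fintype.linearCombination R (normSqForm c (J := J)) l = 0 := by
  ext x
  simp [linearCombination_normSqForm_apply, hl]

lemma sum_addChar_linearCombination_normSqForm [Fintype R] [DecidableEq κ] [DecidableEq J]
    {M : Type*} [CommRing M] (ψ : AddChar R M) (l : ι → R) :
    ∑ x : κ → J → R, ψ (Fintype.linearCombination R (normSqForm c) l x)
      = (∑ y : κ → R, ψ (sqCombination c l y)) ^ Fintype.card J := by
  simp_rw [linearCombination_normSqForm_apply, AddChar.map_finset_sum]
  rw [← Equiv.sum_comp (Equiv.piComm fun (_ : J) (_ : κ) => R), ← card_univ, ← prod_const,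
    Fintype.prod_sum]
  rfl

end SumsOfSquares

theorem quadratic_level_set_count_general (p : ℕ) [Fact p.Prime] (hp : Odd p)
    (n : ℕ) (t D : ℕ) (c : Fin t → Fin D → ZMod p) (k : ℕ)
    (hk : k = Module.finrank (ZMod p) (Submodule.span (ZMod p)
      (Set.range (fun i : Fin t =>
        (fun x : Fin D → Fin n → ZMod p => ∑ j, (∑ d, c i d * x d j) ^ 2 :
          (Fin D → Fin n → ZMod p) → ZMod p))))) :
    ‖linT n c (fun v => if ∑ j, v j ^ 2 = 0 then 1 else 0) - ((p : ℂ) ^ k)⁻¹‖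
      ≤ (p : ℝ) ^ (-(n : ℝ) / 2) := by
  have h2 : (2 : ZMod p) ≠ 0 := Ring.two_ne_zero <| by
    rw [ZMod.ringChar_zmod_n]
    rintro rfl
    norm_num at hp
  have hψ : ZMod.stdAddChar (N := p) ≠ 1 := by
    simpa using ZMod.isPrimitive_stdAddChar p one_ne_zero
  have hp₀ : (0 : ℝ) < p := by exact_mod_cast (Fact.out : p.Prime).pos
  have hbound := norm_commonZeroDensity_sub_le hψ (normSqForm c (J := Fin n))
    (B := ((p : ℝ) ^ D / √p) ^ n) (by positivity) fun l hl => by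
      rw [sum_addChar_linearCombination_normSqForm, norm_pow, Fintype.card_fin]
      gcongr
      simpa using norm_sum_addChar_quadraticMap_le h2 hψ
        (mt (linearCombination_normSqForm_eq_zero c) hl)
  have hX : Fintype.card (Fin D → Fin n → ZMod p) = p ^ (n * D) := by simp [pow_mul]
  rw [hk]
  convert hbound using 1
  · rw [commonZeroDensity, hX, Nat.cast_pow, ZMod.card]
    rfl
  · rw [hX, Nat.cast_pow, div_pow, ← pow_mul, mul_comm D n, div_right_comm,
      div_self (by positivity), one_div, Real.rpow_div_two_eq_sqrt _ hp₀.le,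
      Real.rpow_neg (Real.sqrt_nonneg _), Real.rpow_natCast]

/-- Let `A ⊆ 𝔽_p^n` be the zero set of `x ↦ xᵀx` (`p` odd) and let `k` be the dimension
of the `𝔽_p`-span of the quadratic functions `x ↦ ψ_i(x)ᵀψ_i(x)` on `(𝔽_p^n)^D`.
Then `|T_Ψ(1_A) − p^{−k}| ≤ p^{−n/2}`. -/
theorem quadratic_level_set_count (p : ℕ) [Fact p.Prime] (hp : Odd p)
    (n : ℕ) (hn : 1 ≤ n) (t D : ℕ) (c : Fin t → Fin D → ZMod p) (k : ℕ)
    (hk : k = Module.finrank (ZMod p) (Submodule.span (ZMod p)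
      (Set.range (fun i : Fin t =>
        (fun x : Fin D → Fin n → ZMod p => ∑ j, (∑ d, c i d * x d j) ^ 2 :
          (Fin D → Fin n → ZMod p) → ZMod p))))) :
    ‖linT n c (fun v => if ∑ j, v j ^ 2 = 0 then 1 else 0) - ((p : ℂ) ^ k)⁻¹‖
      ≤ (p : ℝ) ^ (-(n : ℝ) / 2) :=
  quadratic_level_set_count_general p hp n t D c k hk
end

section
/- Let p be a prime, t ≥ 5 an integer, and consider the rational number N(p,t) := (1−p)^t + p³(C(t,2) − t + 1) − (p²C(t,2) − pt + 1), where C(t,2) = t(t−1)/2. Then N(p,t) ≠ 0 for all primes p and all integers t ≥ 5. -/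
private lemma sq_le_two_pow_aux (n : ℕ) (hn : 15 ≤ n) : n ^ 2 ≤ 2 ^ (n - 6) := by
  induction n, hn using Nat.le_induction with
  | base => norm_num
  | succ n hn ih =>
    have h1 : n + 1 - 6 = (n - 6) + 1 := by omega
    rw [h1, pow_succ]
    calc (n+1)^2 ≤ n^2 * 2 := by nlinarith
      _ ≤ 2^(n-6) * 2 := Nat.mul_le_mul_right 2 ih

private lemma numerator_check (p t : ℕ) (hp : p.Prime) (hple : p ≤ 49)
    (htt : t = 5 ∨ t = 7 ∨ t = 9 ∨ t = 11 ∨ t = 13) :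
    (1 - (p : ℤ)) ^ t + (p : ℤ) ^ 3 * ((t.choose 2 : ℤ) - t + 1)
      - ((p : ℤ) ^ 2 * (t.choose 2 : ℤ) - (p : ℤ) * t + 1) ≠ 0 := by
  have h2 : 2 ≤ p := hp.two_le
  interval_cases p <;> first
    | ((rcases htt with rfl|rfl|rfl|rfl|rfl <;> norm_num [Nat.choose_two_right]); done)
    | (norm_num at hp)

set_option maxHeartbeats 2000000 in
/-- The numerator `(1−p)^t + p³(C(t,2) − t + 1) − (p²C(t,2) − pt + 1)` is nonzero
for all primes `p` and all integers `t ≥ 5`. -/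
theorem numerator_ne_zero (p t : ℕ) (hp : p.Prime) (ht : 5 ≤ t) :
    (1 - (p : ℤ)) ^ t + (p : ℤ) ^ 3 * ((t.choose 2 : ℤ) - t + 1)
      - ((p : ℤ) ^ 2 * (t.choose 2 : ℤ) - (p : ℤ) * t + 1) ≠ 0 := by
  have hq : 2 ≤ (p:ℤ) := by exact_mod_cast hp.two_le
  have hq0 : (0:ℤ) ≤ (p:ℤ) := by linarith
  have htz : (5:ℤ) ≤ (t:ℤ) := by exact_mod_cast ht
  have h2cN : 2 * t.choose 2 = t * (t - 1) := by
    have h := Nat.choose_two_right t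
    have he : 2 ∣ t * (t - 1) := by
      have h2 : Even ((t-1)*(t-1+1)) := Nat.even_mul_succ_self (t-1)
      have h3 : (t-1)*(t-1+1) = t*(t-1) := by
        have h4 : t - 1 + 1 = t := by omega
        rw [h4]; ring
      rw [h3] at h2
      exact h2.two_dvd
    rw [h, Nat.mul_div_cancel' he]
  have h2c : 2 * ((t.choose 2 : ℤ)) = (t:ℤ) * ((t:ℤ) - 1) := by
    have h := h2cN
    zify [show 1 ≤ t by omega] at h
    linarith
  have hcpos : (0:ℤ) ≤ (t.choose 2 : ℤ) := by positivity
  -- the key positivity fact:  (p³ - p²)·C ≥ (p³ - p)·t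
  have ha : (0:ℤ) ≤ (p:ℤ) * ((t:ℤ)-1) - 2*(p:ℤ) - 2 := by
    have h1 : (2:ℤ)*2 ≤ (p:ℤ)*((t:ℤ)-3) :=
      mul_le_mul hq (by linarith) (by norm_num) hq0
    nlinarith [h1]
  have keyeq : 2*((p:ℤ)^3*(t.choose 2 : ℤ) - (p:ℤ)^2*(t.choose 2 : ℤ)
      - ((p:ℤ)^3-(p:ℤ))*(t:ℤ))
      = (t:ℤ)*((p:ℤ)*((p:ℤ)-1))*((p:ℤ)*((t:ℤ)-1) - 2*((p:ℤ)+1)) := by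
    linear_combination ((p:ℤ)^2*((p:ℤ)-1)) * h2c
  have key : (0:ℤ) ≤ (p:ℤ)^3*(t.choose 2 : ℤ) - (p:ℤ)^2*(t.choose 2 : ℤ)
      - ((p:ℤ)^3-(p:ℤ))*(t:ℤ) := by
    have hterm : (0:ℤ) ≤ (t:ℤ)*((p:ℤ)*((p:ℤ)-1))*((p:ℤ)*((t:ℤ)-1) - 2*((p:ℤ)+1)) := by
      apply mul_nonneg
      · apply mul_nonneg (by linarith)
        exact mul_nonneg hq0 (by linarith)
      · linarith [ha]
    linarith [keyeq.ge, keyeq.le, hterm]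
  have hp8 : (8:ℤ) ≤ (p:ℤ)^3 := by nlinarith [hq]
  rcases Nat.even_or_odd t with hev | hodd
  · -- t even : N > 0
    have hpow : (1 - (p:ℤ))^t = ((p:ℤ) - 1)^t := by
      rw [show (1 - (p:ℤ)) = -((p:ℤ)-1) by ring, hev.neg_pow]
    have hR : (0:ℤ) ≤ ((p:ℤ)-1)^t := pow_nonneg (by linarith) t
    rw [hpow]
    intro h0
    nlinarith [key, hR, hp8, h0]
  · have hpow : (1 - (p:ℤ))^t = -(((p:ℤ) - 1)^t) := by
      rw [show (1 - (p:ℤ)) = -((p:ℤ)-1) by ring, hodd.neg_pow]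
    by_cases hp2 : p = 2
    · subst hp2
      rw [hpow]
      norm_num
      nlinarith [h2c]
    · have hq3 : 3 ≤ (p:ℤ) := by
        have h3 : 3 ≤ p := by
          have := hp.two_le; omega
        exact_mod_cast h3
      by_cases hbig : (p:ℤ)^3 * (t:ℤ)^2 ≤ ((p:ℤ)-1)^t
      · -- N < 0
        rw [hpow]
        intro h0
        have hc1 : (t.choose 2 : ℤ) + 1 ≤ (t:ℤ)^2 := by nlinarith [h2c, htz]
        have hP3 : (p:ℤ)^3*((t.choose 2 : ℤ)+1) ≤ (p:ℤ)^3*(t:ℤ)^2 :=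
          mul_le_mul_of_nonneg_left hc1 (by positivity)
        have hA : (0:ℤ) ≤ (p:ℤ)^2 * (t.choose 2 : ℤ) := by positivity
        have hB : (0:ℤ) ≤ ((p:ℤ)^3 - (p:ℤ))*(t:ℤ) := by
          apply mul_nonneg _ (by linarith)
          nlinarith [hq]
        linarith [h0, hbig, hA, hB, hP3]
      · push_neg at hbig
        by_cases ht5 : t = 5
        · subst ht5
          have hple : p ≤ 49 := by
            by_contra hcon
            push_neg at hcon
            have h8 : (8:ℤ) ≤ (p:ℤ) := by exact_mod_cast (by omega : 8 ≤ p)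
            have e4 := mul_le_mul_of_nonneg_right h8 (pow_nonneg (by linarith : (0:ℤ) ≤ (p:ℤ)-1) 4)
            have e3 := mul_le_mul_of_nonneg_right h8 (pow_nonneg (by linarith : (0:ℤ) ≤ (p:ℤ)-1) 3)
            have e2 := mul_le_mul_of_nonneg_right h8 (pow_nonneg (by linarith : (0:ℤ) ≤ (p:ℤ)-1) 2)
            have e1 := mul_le_mul_of_nonneg_right h8 (pow_nonneg (by linarith : (0:ℤ) ≤ (p:ℤ)-1) 1)
            norm_num at hbig
            nlinarith [hbig, e4, e3, e2, e1, h8]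
          exact numerator_check p 5 hp hple (Or.inl rfl)
        · have ht7 : 7 ≤ t := by
            obtain ⟨k, hk⟩ := hodd; omega
          have hxq : (p:ℤ) ≤ ((p:ℤ)-1)^2 := by nlinarith [hq3]
          have hq3x : (p:ℤ)^3 ≤ ((p:ℤ)-1)^6 := by
            have h := pow_le_pow_left₀ hq0 hxq 3
            calc (p:ℤ)^3 ≤ (((p:ℤ)-1)^2)^3 := h
              _ = ((p:ℤ)-1)^6 := by ring
          have h1 : ((p:ℤ)-1)^t < ((p:ℤ)-1)^6 * (t:ℤ)^2 :=
            lt_of_lt_of_le hbig (mul_le_mul_of_nonneg_right hq3x (sq_nonneg _))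
          have h2 : ((p:ℤ)-1)^t = ((p:ℤ)-1)^6 * ((p:ℤ)-1)^(t-6) := by
            rw [← pow_add]; congr 1; omega
          have h3 : ((p:ℤ)-1)^(t-6) < (t:ℤ)^2 := by
            rw [h2] at h1
            exact lt_of_mul_lt_mul_left h1 (pow_nonneg (by linarith) 6)
          have h4 : (2:ℤ)^(t-6) ≤ ((p:ℤ)-1)^(t-6) :=
            pow_le_pow_left₀ (by norm_num) (by linarith) _
          have h5N : 2^(t-6) < t^2 := by exact_mod_cast lt_of_le_of_lt h4 h3
          have ht14 : t ≤ 14 := by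
            by_contra h
            push_neg at h
            have := sq_le_two_pow_aux t (by omega)
            omega
          have htk : t = 7 ∨ t = 9 ∨ t = 11 ∨ t = 13 := by
            obtain ⟨k, hk⟩ := hodd; omega
          have hple : p ≤ 49 := by
            rcases htk with rfl | rfl | rfl | rfl
            · -- t = 7 : (p-1)^1 < 49
              have h3' : ((p:ℤ)-1)^1 < 49 := by exact_mod_cast h3
              rw [pow_one] at h3'
              have : (p:ℤ) < 50 := by linarith
              omega
            · -- t = 9 : (p-1)^3 < 81 ⇒ p ≤ 5
              by_contra hcon
              push_neg at hcon
              have h6 : (5:ℤ) ≤ (p:ℤ)-1 := by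
                have : (50:ℕ) ≤ p := by omega
                have : (50:ℤ) ≤ (p:ℤ) := by exact_mod_cast this
                linarith
              have := pow_le_pow_left₀ (by norm_num : (0:ℤ) ≤ 5) h6 3
              norm_num at h3 this
              linarith
            · by_contra hcon
              push_neg at hcon
              have h6 : (5:ℤ) ≤ (p:ℤ)-1 := by
                have : (50:ℕ) ≤ p := by omega
                have : (50:ℤ) ≤ (p:ℤ) := by exact_mod_cast this
                linarith
              have := pow_le_pow_left₀ (by norm_num : (0:ℤ) ≤ 5) h6 5
              norm_num at h3 this
              linarith
            · by_contra hcon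
              push_neg at hcon
              have h6 : (5:ℤ) ≤ (p:ℤ)-1 := by
                have : (50:ℕ) ≤ p := by omega
                have : (50:ℤ) ≤ (p:ℤ) := by exact_mod_cast this
                linarith
              have := pow_le_pow_left₀ (by norm_num : (0:ℤ) ≤ 5) h6 7
              norm_num at h3 this
              linarith
          exact numerator_check p t hp hple (by tauto)
end

section
/- Let M be a 2×t matrix over 𝔽_p (t ≥ 3) all of whose 2×2 minors are nonsingular. For S ⊆ [t], let M_S be the restriction of M to the columns indexed by S, and let M_S^{(2)} be the 3×|S| matrix whose rows are the coordinatewise square of the first row of M_S, the coordinatewise square of the second row, and the coordinatewise product of the two rows. If p is odd, then rank M_S^{(2)} = min(|S|, 3); in particular, if |S| ≥ 3 then rank M_S^{(2)} = 3. -/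
open Finset

lemma aux_submatrix_rank_le {K : Type*} [Field K] {m n m' n' : Type*}
    [Fintype m] [Fintype n] [Fintype m'] [Fintype n'] [DecidableEq m] [DecidableEq n]
    (A : Matrix m n K) (f : m' → m) (g : n' → n) :
    (A.submatrix f g).rank ≤ A.rank := by
  classical
  have h : A.submatrix f g =
      (Matrix.of fun i r => if f i = r then (1 : K) else 0) * A *
        (Matrix.of fun j c => if j = g c then (1 : K) else 0) := by
    ext i c
    simp [Matrix.mul_apply, Finset.sum_ite_eq, Finset.sum_ite_eq', ite_mul, mul_ite,
      Finset.mul_sum]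
  rw [h]
  exact le_trans (Matrix.rank_mul_le_left _ _) (Matrix.rank_mul_le_right _ _)

lemma aux_le_rank {K : Type*} [Field K] {m n : Type*}
    [Fintype m] [Fintype n] [DecidableEq m] [DecidableEq n] {k : ℕ}
    (A : Matrix m n K) (f : Fin k → m) (g : Fin k → n)
    (h : (A.submatrix f g).det ≠ 0) : k ≤ A.rank := by
  have hu : IsUnit (A.submatrix f g) :=
    (Matrix.isUnit_iff_isUnit_det _).2 (isUnit_iff_ne_zero.2 h)
  have := Matrix.rank_of_isUnit _ hu
  rw [Fintype.card_fin] at this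
  calc k = (A.submatrix f g).rank := this.symm
    _ ≤ A.rank := aux_submatrix_rank_le A f g

/-- Let `M` be a `2 × t` matrix over `𝔽_p` (`p` odd, `t ≥ 3`) all of whose `2 × 2`
minors are nonsingular. For `S ⊆ [t]`, the `3 × |S|` matrix `M_S^{(2)}` whose rows are
the entrywise squares of the two rows of `M_S` and their entrywise product has rank
`min(|S|, 3)`. -/
theorem rank_of_squared_matrix (p t : ℕ) [Fact p.Prime] (hp : Odd p) (ht : 3 ≤ t)
    (M : Matrix (Fin 2) (Fin t) (ZMod p))
    (hM : ∀ i j : Fin t, i ≠ j → M 0 i * M 1 j - M 0 j * M 1 i ≠ 0)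
    (S : Finset (Fin t)) :
    (Matrix.of (fun (r : Fin 3) (j : {x // x ∈ S}) =>
        if r = 0 then M 0 j.1 * M 0 j.1
        else if r = 1 then M 1 j.1 * M 1 j.1
        else M 0 j.1 * M 1 j.1)).rank = min S.card 3 := by
  classical
  set N : Matrix (Fin 3) {x // x ∈ S} (ZMod p) :=
    Matrix.of (fun (r : Fin 3) (j : {x // x ∈ S}) =>
        if r = 0 then M 0 j.1 * M 0 j.1
        else if r = 1 then M 1 j.1 * M 1 j.1
        else M 0 j.1 * M 1 j.1) with hN
  have hN0 : ∀ j, N 0 j = M 0 j.1 * M 0 j.1 := fun j => by simp [hN]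
  have hN1 : ∀ j, N 1 j = M 1 j.1 * M 1 j.1 := fun j => by
    simp [hN, show (1 : Fin 3) ≠ 0 by decide]
  have hN2 : ∀ j, N 2 j = M 0 j.1 * M 1 j.1 := fun j => by
    simp [hN, show (2 : Fin 3) ≠ 0 by decide, show (2 : Fin 3) ≠ 1 by decide]
  refine le_antisymm (le_min ?_ ?_) ?_
  · calc N.rank ≤ Fintype.card {x // x ∈ S} := Matrix.rank_le_card_width N
      _ = S.card := Fintype.card_coe S
  · calc N.rank ≤ Fintype.card (Fin 3) := Matrix.rank_le_card_height N
      _ = 3 := Fintype.card_fin 3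
  -- lower bound
  rcases Nat.lt_or_ge S.card 3 with hc | hc
  · interval_cases h : S.card
    · simp
    · -- card = 1
      simp only [min_eq_left (by norm_num : (1:ℕ) ≤ 3)]
      obtain ⟨j, hj⟩ := Finset.card_pos.mp (by omega : 0 < S.card)
      have : Nontrivial (Fin t) := by
        have : 2 ≤ t := by omega
        exact Fin.nontrivial_iff_two_le.mpr this
      obtain ⟨k, hk⟩ := exists_ne j
      have hminor := hM j k (Ne.symm hk)
      have hab : M 0 j ≠ 0 ∨ M 1 j ≠ 0 := by
        by_contra hcon
        push_neg at hcon
        rw [hcon.1, hcon.2] at hminor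
        simp at hminor
      rcases hab with ha | hb
      · refine aux_le_rank N (fun _ => (0 : Fin 3)) (fun _ => ⟨j, hj⟩) ?_
        rw [Matrix.det_fin_one]
        simpa [hN0] using mul_ne_zero ha ha
      · refine aux_le_rank N (fun _ => (1 : Fin 3)) (fun _ => ⟨j, hj⟩) ?_
        rw [Matrix.det_fin_one]
        simpa [hN1] using mul_ne_zero hb hb
    · -- card = 2
      simp only [min_eq_left (by norm_num : (2:ℕ) ≤ 3)]
      obtain ⟨j1, hj1, j2, hj2, hne⟩ := Finset.one_lt_card.mp (by omega : 1 < S.card)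
      have hD := hM j1 j2 hne
      set a := M 0 j1; set b := M 1 j1; set c := M 0 j2; set d := M 1 j2
      set g : Fin 2 → {x // x ∈ S} := ![⟨j1, hj1⟩, ⟨j2, hj2⟩] with hg
      by_cases hadd : a * d + c * b = 0
      · have ha : a ≠ 0 := by
          intro h0
          apply hD
          have : c * b = 0 := by rw [h0] at hadd; linear_combination hadd
          rw [h0]; linear_combination -this
        have hc' : c ≠ 0 := by
          intro h0
          apply hD
          have : a * d = 0 := by rw [h0] at hadd; linear_combination hadd
          rw [h0]; linear_combination this
        refine aux_le_rank N ![0, 2] g ?_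
        have key : (N.submatrix ![0, 2] g).det = a * c * (a * d - c * b) := by
          rw [Matrix.det_fin_two]
          simp [hg, hN0, hN2]
          ring
        rw [key]
        exact mul_ne_zero (mul_ne_zero ha hc') hD
      · refine aux_le_rank N ![0, 1] g ?_
        have key : (N.submatrix ![0, 1] g).det = (a * d - c * b) * (a * d + c * b) := by
          rw [Matrix.det_fin_two]
          simp [hg, hN0, hN1]
          ring
        rw [key]
        exact mul_ne_zero hD hadd
  · -- card ≥ 3
    rw [min_eq_right hc]
    have hcard : Fintype.card (Fin 3) ≤ Fintype.card {x // x ∈ S} := by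
      rw [Fintype.card_fin, Fintype.card_coe]; exact hc
    obtain ⟨f⟩ := Function.Embedding.nonempty_of_card_le hcard
    have hval : ∀ i j : Fin 3, i ≠ j → ((f i : Fin t) ≠ (f j : Fin t)) := by
      intro i j hij h
      exact hij (f.injective (Subtype.ext h))
    refine aux_le_rank N id (fun i => f i) ?_
    set x0 := M 0 (f 0); set y0 := M 1 (f 0)
    set x1 := M 0 (f 1); set y1 := M 1 (f 1)
    set x2 := M 0 (f 2); set y2 := M 1 (f 2)
    have key : (N.submatrix id (fun i => f i)).det =
        -((x0 * y1 - x1 * y0) * (x0 * y2 - x2 * y0) * (x1 * y2 - x2 * y1)) := by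
      rw [Matrix.det_fin_three]
      simp [hN0, hN1, hN2]
      ring
    rw [key]
    exact neg_ne_zero.mpr (mul_ne_zero (mul_ne_zero
      (hM _ _ (hval 0 1 (by decide))) (hM _ _ (hval 0 2 (by decide))))
      (hM _ _ (hval 1 2 (by decide))))
end

section
/- Let Ψ be a system of t linear forms whose image has codimension 2, defined by a 2×t matrix M over 𝔽_p all of whose 2×2 minors are nonsingular, and let Φ be defined by a single equation a₁x₁ + ⋯ + a_l x_l = 0 with all aᵢ ≠ 0 and such that a₁ ≠ ±a₂ (after relabelling). Then for all n ≥ 2 there exists f : 𝔽_p^n → [−1,1] with 𝔼_x f(x) = 0, T_Φ(f) = 0, and T_Ψ(f) ≥ 2/(2t)^t. -/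
/-!
Take `f = Re F` with `F x = (2t)⁻¹ ∑_{k, ±} e(±u_k ⬝ᵥ x)`, where `u_k ∈ 𝔽_p^n` is the `k`-th
column of `M` padded with zeros; `F` is already real since its frequency set is symmetric.
Expanding the product, `T(F)` for any system is `(2t)^{-t}` times the number of frequency
tuples `(±u_{g i})_i` orthogonal to every solution of the system. For `Ψ` the two tuples
`±(u_k)_k` qualify, so `T_Ψ(f) ≥ 2/(2t)^t`. For the single equation `∑ a_i x_i = 0` a tuple
qualifies only if `a_i v_j = a_j v_i` for its entries `v_i, v_j`; as the columns of `M` are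
pairwise independent this forces `v_i, v_j` to be multiples of one `u_k`, whence `a_i = ±a_j`.
-/

open Finset

/-- The solutions in `(𝔽_p^n)^t` of the system of equations given by the `r × t`
matrix `M` (acting blockwise). -/
noncomputable def kerSols (p : ℕ) [NeZero p] {r t : ℕ} (n : ℕ)
    (M : Matrix (Fin r) (Fin t) (ZMod p)) : Finset (Fin t → Fin n → ZMod p) :=
  Finset.univ.filter (fun x => ∀ a, ∀ j, ∑ i, M a i * x i j = 0)

/-- `T_Ψ(f) = 𝔼_{x ∈ ker M} f(x₁) ⋯ f(x_t)` for a system whose image is `ker M`. -/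
noncomputable def kerT (p : ℕ) [NeZero p] {r t : ℕ} (n : ℕ)
    (M : Matrix (Fin r) (Fin t) (ZMod p)) (f : (Fin n → ZMod p) → ℂ) : ℂ :=
  (∑ x ∈ kerSols p n M, ∏ i, f (x i)) / ((kerSols p n M).card : ℂ)

open Matrix ComplexConjugate

theorem AddChar.map_sum_eq_prod {G R ι : Type*} [AddCommMonoid G] [CommMonoid R]
    (ψ : AddChar G R) (s : Finset ι) (x : ι → G) : ψ (∑ i ∈ s, x i) = ∏ i ∈ s, ψ (x i) := by
  classical
  induction s using Finset.induction_on with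
  | empty => simp
  | insert i s hi ih => rw [sum_insert hi, prod_insert hi, AddChar.map_add_eq_mul, ih]

theorem AddChar.sum_eq_zero_of_add_mem_iff {G R : Type*} [AddGroup G] [CommRing R]
    [NoZeroDivisors R] (ψ : AddChar G R) {s : Finset G} {y : G} (hs : ∀ x, x + y ∈ s ↔ x ∈ s)
    (hψ : ψ y ≠ 1) : ∑ x ∈ s, ψ x = 0 := by
  have hshift : ψ y * ∑ x ∈ s, ψ x = ∑ x ∈ s, ψ x := by
    rw [mul_sum]
    refine sum_equiv (Equiv.addRight y) (fun x => (hs x).symm) fun x _ => ?_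
    simp [AddChar.map_add_eq_mul, mul_comm]
  have : (ψ y - 1) * ∑ x ∈ s, ψ x = 0 := by linear_combination hshift
  exact (mul_eq_zero.1 this).resolve_left (sub_ne_zero.2 hψ)

section

variable {p : ℕ} [NeZero p]

open Classical in
theorem sum_stdAddChar_eq_ite {G : Type*} [AddGroup G] (L : G →+ ZMod p) {s : Finset G}
    (hs : ∀ y ∈ s, ∀ x, x + y ∈ s ↔ x ∈ s) :
    ∑ x ∈ s, ZMod.stdAddChar (L x) = if ∀ x ∈ s, L x = 0 then (#s : ℂ) else 0 := by
  split_ifs with hL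
  · rw [sum_congr rfl fun x hx => show ZMod.stdAddChar (L x) = (1 : ℂ) by
      rw [hL x hx, AddChar.map_zero_eq_one]]
    simp
  · push Not at hL
    obtain ⟨y, hy, hLy⟩ := hL
    refine (ZMod.stdAddChar.compAddMonoidHom L).sum_eq_zero_of_add_mem_iff (hs y hy) ?_
    rw [AddChar.compAddMonoidHom_apply, ← AddChar.map_zero_eq_one (ZMod.stdAddChar (N := p))]
    exact (ZMod.injective_stdAddChar (N := p)).ne hLy

section kerSols

variable {r t n : ℕ} {M : Matrix (Fin r) (Fin t) (ZMod p)}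

@[simp]
theorem mem_kerSols {x : Fin t → Fin n → ZMod p} :
    x ∈ kerSols p n M ↔ ∀ a j, ∑ i, M a i * x i j = 0 := by
  simp [kerSols]

theorem zero_mem_kerSols : (0 : Fin t → Fin n → ZMod p) ∈ kerSols p n M := by
  simp

theorem add_mem_kerSols_iff {x y : Fin t → Fin n → ZMod p} (hy : y ∈ kerSols p n M) :
    x + y ∈ kerSols p n M ↔ x ∈ kerSols p n M := by
  simp_all [mul_add, sum_add_distrib]

end kerSols

section trigPoly

variable {ι κ : Type*} [Fintype ι] [Fintype κ]

/-- `c · ∑ₖ e(w k ⬝ᵥ x)`, the function whose Fourier transform is `c` at each frequency `w k`. -/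
noncomputable def trigPoly (c : ℂ) (w : ι → κ → ZMod p) (x : κ → ZMod p) : ℂ :=
  c * ∑ k, ZMod.stdAddChar (w k ⬝ᵥ x)

theorem norm_trigPoly_le (c : ℂ) (w : ι → κ → ZMod p) (x : κ → ZMod p) :
    ‖trigPoly c w x‖ ≤ ‖c‖ * Fintype.card ι := by
  rw [trigPoly, norm_mul]
  gcongr
  calc _ ≤ ∑ k, ‖ZMod.stdAddChar (w k ⬝ᵥ x)‖ := norm_sum_le _ _
    _ = _ := by simp [AddChar.norm_apply]

theorem conj_trigPoly (c : ℝ) {w : ι → κ → ZMod p} (τ : ι ≃ ι) (hτ : ∀ k, w (τ k) = -w k)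
    (x : κ → ZMod p) : conj (trigPoly c w x) = trigPoly c w x := by
  simp only [trigPoly, map_mul, Complex.conj_ofReal, map_sum, ← AddChar.map_neg_eq_conj,
    ← neg_dotProduct, ← hτ]
  rw [Equiv.sum_comp τ (fun k => ZMod.stdAddChar (w k ⬝ᵥ x))]

theorem sum_trigPoly_eq_zero [DecidableEq κ] (c : ℂ) {w : ι → κ → ZMod p} (hw : ∀ k, w k ≠ 0) :
    ∑ x, trigPoly c w x = 0 := by
  simp only [trigPoly, ← mul_sum]
  rw [sum_comm, sum_eq_zero fun k _ => ?_, mul_zero]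
  obtain ⟨j, hj⟩ := Function.ne_iff.1 (hw k)
  have := sum_stdAddChar_eq_ite (AddMonoidHom.mk' (w k ⬝ᵥ ·) (dotProduct_add (w k)))
    (s := univ) (by simp)
  refine this.trans (if_neg fun h => hj ?_)
  simpa using h (Pi.single j 1) (mem_univ _)

variable {r t n : ℕ}

open Classical in
noncomputable def annihilators (M : Matrix (Fin r) (Fin t) (ZMod p)) (w : ι → Fin n → ZMod p) :
    Finset (Fin t → ι) :=
  {g | ∀ x ∈ kerSols p n M, ∑ i, w (g i) ⬝ᵥ x i = 0}

theorem kerT_trigPoly (M : Matrix (Fin r) (Fin t) (ZMod p)) (c : ℂ) (w : ι → Fin n → ZMod p) :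
    kerT p n M (trigPoly c w) = c ^ t * #(annihilators M w) := by
  classical
  have hK : (#(kerSols p n M) : ℂ) ≠ 0 :=
    Nat.cast_ne_zero.2 (card_ne_zero_of_mem zero_mem_kerSols)
  have hchar (g : Fin t → ι) : ∑ x ∈ kerSols p n M, ZMod.stdAddChar (∑ i, w (g i) ⬝ᵥ x i) =
      if g ∈ annihilators M w then (#(kerSols p n M) : ℂ) else 0 := by
    have := sum_stdAddChar_eq_ite
      (AddMonoidHom.mk' (fun x : Fin t → Fin n → ZMod p => ∑ i, w (g i) ⬝ᵥ x i)
        fun x y => by simp [dotProduct_add, sum_add_distrib])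
      fun y hy x => add_mem_kerSols_iff (M := M) hy
    simpa [annihilators] using this
  rw [kerT, div_eq_iff hK]
  simp only [trigPoly, prod_mul_distrib, prod_const, card_univ, Fintype.card_fin, prod_univ_sum,
    Fintype.piFinset_univ, ← AddChar.map_sum_eq_prod]
  rw [← mul_sum, sum_comm, mul_assoc]
  simp only [hchar, sum_ite_mem, univ_inter, sum_const, nsmul_eq_mul]

end trigPoly

noncomputable def colFreq {R : Type*} [Zero R] {r t n : ℕ} (hrn : r ≤ n)
    (M : Matrix (Fin r) (Fin t) R) (k : Fin t) : Fin n → R :=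
  Function.extend (Fin.castLE hrn) (fun i => M i k) 0

theorem colFreq_castLE {R : Type*} [Zero R] {r t n : ℕ} (hrn : r ≤ n)
    (M : Matrix (Fin r) (Fin t) R) (k : Fin t) (i : Fin r) :
    colFreq hrn M k (Fin.castLE hrn i) = M i k :=
  (Fin.castLE_injective hrn).extend_apply _ _ _

theorem sum_colFreq_dotProduct_eq_zero {r t n : ℕ} (hrn : r ≤ n)
    {M : Matrix (Fin r) (Fin t) (ZMod p)} {x : Fin t → Fin n → ZMod p}
    (hx : x ∈ kerSols p n M) : ∑ k, colFreq hrn M k ⬝ᵥ x k = 0 := by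
  simp only [dotProduct]
  rw [sum_comm]
  refine sum_eq_zero fun j _ => ?_
  by_cases hj : ∃ i, Fin.castLE hrn i = j
  · obtain ⟨i, rfl⟩ := hj
    simp only [colFreq_castLE]
    exact mem_kerSols.1 hx i _
  · simp [colFreq, Function.extend_apply' _ _ _ hj]

theorem pairwise_linearIndependent_colFreq {K : Type*} [Field K] {t n : ℕ} (hn : 2 ≤ n)
    (M : Matrix (Fin 2) (Fin t) K) (hM : ∀ i j, i ≠ j → M 0 i * M 1 j - M 0 j * M 1 i ≠ 0) :
    Pairwise fun i j => LinearIndependent K ![colFreq hn M i, colFreq hn M j] := by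
  refine fun i j hij => LinearIndependent.pair_iff.2 fun s s' h => ?_
  have h0 := congrFun h (Fin.castLE hn 0)
  have h1 := congrFun h (Fin.castLE hn 1)
  simp only [Pi.add_apply, Pi.smul_apply, smul_eq_mul, colFreq_castLE, Pi.zero_apply] at h0 h1
  have hs : s * (M 0 i * M 1 j - M 0 j * M 1 i) = 0 := by
    linear_combination M 1 j * h0 - M 0 j * h1
  have hs' : s' * (M 0 i * M 1 j - M 0 j * M 1 i) = 0 := by
    linear_combination M 0 i * h1 - M 1 i * h0
  exact ⟨(mul_eq_zero.1 hs).resolve_right (hM i j hij),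
    (mul_eq_zero.1 hs').resolve_right (hM i j hij)⟩

theorem ne_zero_of_pairwise_linearIndependent {K V ι : Type*} [Field K] [AddCommGroup V]
    [Module K V] [Nontrivial ι] {u : ι → V}
    (hu : Pairwise fun i j => LinearIndependent K ![u i, u j]) (i : ι) : u i ≠ 0 := by
  obtain ⟨j, hj⟩ := exists_ne i
  simpa using (hu hj.symm).ne_zero 0

theorem smul_sub_smul_ne_zero_of_pairwise_linearIndependent {K V ι : Type*} [Field K]
    [AddCommGroup V] [Module K V] {u : ι → V}
    (hu : Pairwise fun i j => LinearIndependent K ![u i, u j]) (hu0 : ∀ i, u i ≠ 0) {α β : K}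
    (hα : α ≠ 0) (hαβ : α ≠ β) (i j : ι) : α • u i - β • u j ≠ 0 := by
  rcases eq_or_ne i j with rfl | hij
  · rw [← sub_smul]
    exact smul_ne_zero (sub_ne_zero.2 hαβ) (hu0 i)
  · intro h
    refine hα (LinearIndependent.pair_iff.1 (hu hij) α (-β) ?_).1
    rwa [neg_smul, ← sub_eq_add_neg]

section signedFreq

variable {ι V : Type*} [AddCommGroup V]

def signedFreq (u : ι → V) (c : ι × ℤˣ) : V :=
  c.2 • u c.1

theorem signedFreq_neg (u : ι → V) (k : ι) (σ : ℤˣ) :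
    signedFreq u (k, -σ) = -signedFreq u (k, σ) :=
  Units.neg_smul σ (u k)

theorem signedFreq_ne_zero {u : ι → V} (hu0 : ∀ k, u k ≠ 0) (c : ι × ℤˣ) :
    signedFreq u c ≠ 0 :=
  (smul_ne_zero_iff_ne c.2).2 (hu0 c.1)

theorem smul_signedFreq_sub_ne_zero {K : Type*} [Field K] [Module K V] {u : ι → V}
    (hu : Pairwise fun i j => LinearIndependent K ![u i, u j]) (hu0 : ∀ i, u i ≠ 0) {a b : K}
    (ha : a ≠ 0) (hab : a ≠ b) (hab' : a ≠ -b) (c c' : ι × ℤˣ) :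
    a • signedFreq u c - b • signedFreq u c' ≠ 0 := by
  simp only [signedFreq, Units.smul_def, ← Int.cast_smul_eq_zsmul K, smul_smul]
  apply smul_sub_smul_ne_zero_of_pairwise_linearIndependent hu hu0 <;>
    rcases Int.units_eq_one_or c.2 with h | h <;> rcases Int.units_eq_one_or c'.2 with h' | h' <;>
    simp [h, h', ha, hab, hab', neg_eq_iff_eq_neg]

end signedFreq

theorem ofReal_re_trigPoly_signedFreq {ι κ : Type*} [Fintype ι] [Fintype κ] (c : ℝ)
    (u : ι → κ → ZMod p) (x : κ → ZMod p) :
    ((trigPoly c (signedFreq u) x).re : ℂ) = trigPoly c (signedFreq u) x :=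
  Complex.conj_eq_iff_re.1 <|
    conj_trigPoly c (.prodCongr (.refl _) (.neg ℤˣ)) (fun _ => signedFreq_neg u _ _) x

theorem exists_mem_kerSols_sum_dotProduct_ne_zero {l n : ℕ} (a : Fin l → ZMod p)
    {i₀ j₀ : Fin l} (v : Fin l → Fin n → ZMod p) (hv : a i₀ • v j₀ - a j₀ • v i₀ ≠ 0) :
    ∃ x ∈ kerSols p n (of fun (_ : Fin 1) i => a i), ∑ i, v i ⬝ᵥ x i ≠ 0 := by
  obtain ⟨m, hm⟩ := Function.ne_iff.1 hv
  let e : Fin n → ZMod p := Pi.single m 1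
  refine ⟨Pi.single j₀ (a i₀ • e) - Pi.single i₀ (a j₀ • e), ?_, ?_⟩
  · simp only [mem_kerSols, of_apply, Pi.sub_apply, Pi.single_apply, ite_apply, Pi.smul_apply,
      smul_eq_mul, Pi.zero_apply, mul_sub, mul_ite, mul_zero, sum_sub_distrib, sum_ite_eq',
      mem_univ, ↓reduceIte, forall_const]
    intro m'
    ring
  · simpa [Pi.single_apply, apply_ite (dotProduct _), dotProduct_sub, sum_sub_distrib, e] using hm

theorem annihilators_signedFreq_eq_empty [Fact p.Prime] {ι : Type*} [Fintype ι] {l n : ℕ}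
    (a : Fin l → ZMod p) {i₀ j₀ : Fin l} (ha : a i₀ ≠ 0) (hab : a i₀ ≠ a j₀)
    (hab' : a i₀ ≠ -a j₀) {u : ι → Fin n → ZMod p}
    (hu : Pairwise fun k k' => LinearIndependent (ZMod p) ![u k, u k']) (hu0 : ∀ k, u k ≠ 0) :
    annihilators (of fun (_ : Fin 1) i => a i) (signedFreq u) = ∅ := by
  refine filter_eq_empty_iff.2 fun g _ hg => ?_
  obtain ⟨x, hx, hne⟩ := exists_mem_kerSols_sum_dotProduct_ne_zero a (signedFreq u ∘ g)
    (smul_signedFreq_sub_ne_zero hu hu0 ha hab hab' (g j₀) (g i₀))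
  exact hne (hg x hx)

theorem two_le_card_annihilators_signedFreq {r t n : ℕ} [NeZero t]
    {M : Matrix (Fin r) (Fin t) (ZMod p)} {u : Fin t → Fin n → ZMod p}
    (hu : ∀ x ∈ kerSols p n M, ∑ k, u k ⬝ᵥ x k = 0) :
    2 ≤ #(annihilators M (signedFreq u)) := by
  classical
  calc 2 = #(univ : Finset ℤˣ) := rfl
    _ ≤ _ := card_le_card_of_injOn (fun σ (k : Fin t) => (k, σ)) (fun σ _ => ?_)
      fun σ _ σ' _ h => congrArg Prod.snd (congrFun h 0)
  simp only [annihilators, coe_filter, mem_univ, true_and]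
  intro x hx
  simp only [signedFreq, smul_dotProduct, ← smul_sum, hu x hx, smul_zero]

end

theorem not_weakly_sidorenko_generic_case_general (p : ℕ) [Fact p.Prime] (t l : ℕ)
    (ht : 2 ≤ t)
    (M : Matrix (Fin 2) (Fin t) (ZMod p))
    (hM : ∀ i j : Fin t, i ≠ j → M 0 i * M 1 j - M 0 j * M 1 i ≠ 0)
    (a : Fin l → ZMod p) (ha : ∀ i, a i ≠ 0)
    (hab : ∃ i j : Fin l, i ≠ j ∧ a i ≠ a j ∧ a i ≠ -a j)
    (n : ℕ) (hn : 2 ≤ n) :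
    ∃ f : (Fin n → ZMod p) → ℝ,
      (∀ x, f x ∈ Set.Icc (-1 : ℝ) 1) ∧ (∑ x : Fin n → ZMod p, f x = 0) ∧
      kerT p n (Matrix.of fun (_ : Fin 1) i => a i) (fun x => (f x : ℂ)) = 0 ∧
      (2 / (2 * (t : ℝ)) ^ t) ≤ (kerT p n M (fun x => (f x : ℂ))).re := by
  obtain ⟨i₀, j₀, -, hab, hab'⟩ := hab
  have : NeZero t := ⟨by omega⟩
  have : Nontrivial (Fin t) := Fin.nontrivial_iff_two_le.2 ht
  set u := colFreq hn M
  have hu := pairwise_linearIndependent_colFreq hn M hM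
  have hu0 := ne_zero_of_pairwise_linearIndependent hu
  set c : ℝ := (2 * t)⁻¹
  set F := trigPoly (c : ℂ) (signedFreq u)
  have hF : (fun x => ((F x).re : ℂ)) = F := funext (ofReal_re_trigPoly_signedFreq c u)
  have hc : ‖(c : ℂ)‖ * Fintype.card (Fin t × ℤˣ) = 1 := by
    rw [Complex.norm_of_nonneg (by positivity), Fintype.card_prod, Fintype.card_fin,
      Fintype.card_units_int]
    push_cast [c]
    field_simp
  refine ⟨fun x => (F x).re, fun x => ?_, ?_, ?_, ?_⟩
  · exact abs_le.1 ((Complex.abs_re_le_norm _).trans (hc ▸ norm_trigPoly_le _ _ x))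
  · rw [← Complex.re_sum, sum_trigPoly_eq_zero _ (signedFreq_ne_zero hu0), Complex.zero_re]
  · rw [hF, kerT_trigPoly, annihilators_signedFreq_eq_empty a (ha i₀) hab hab' hu hu0,
      card_empty, Nat.cast_zero, mul_zero]
  · have := two_le_card_annihilators_signedFreq (M := M) fun x hx =>
      sum_colFreq_dotProduct_eq_zero hn hx
    rw [hF, kerT_trigPoly, ← Complex.ofReal_pow, ← Complex.ofReal_natCast, ← Complex.ofReal_mul,
      Complex.ofReal_re]
    calc 2 / (2 * (t : ℝ)) ^ t = c ^ t * 2 := by rw [div_eq_mul_inv, ← inv_pow, mul_comm]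
      _ ≤ _ := by gcongr; exact_mod_cast this

/-- Proposition 3.1: if `Ψ` is a linearly generic codimension-2 system in `t` variables
and `Φ` is a single equation `∑ a_i x_i = 0` with all `a_i ≠ 0` and some `a_i ≠ ±a_j`,
then for all `n ≥ 2` there is `f : 𝔽_p^n → [−1,1]` with mean zero, `T_Φ(f) = 0` and
`T_Ψ(f) ≥ 2/(2t)^t`. -/
theorem not_weakly_sidorenko_generic_case (p : ℕ) [Fact p.Prime] (t l : ℕ)
    (ht : 2 ≤ t) (hl : 2 ≤ l)
    (M : Matrix (Fin 2) (Fin t) (ZMod p))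
    (hM : ∀ i j : Fin t, i ≠ j → M 0 i * M 1 j - M 0 j * M 1 i ≠ 0)
    (a : Fin l → ZMod p) (ha : ∀ i, a i ≠ 0)
    (hab : ∃ i j : Fin l, i ≠ j ∧ a i ≠ a j ∧ a i ≠ -a j)
    (n : ℕ) (hn : 2 ≤ n) :
    ∃ f : (Fin n → ZMod p) → ℝ,
      (∀ x, f x ∈ Set.Icc (-1 : ℝ) 1) ∧ (∑ x : Fin n → ZMod p, f x = 0) ∧
      kerT p n (Matrix.of fun (_ : Fin 1) i => a i) (fun x => (f x : ℂ)) = 0 ∧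
      (2 / (2 * (t : ℝ)) ^ t) ≤ (kerT p n M (fun x => (f x : ℂ))).re :=
  not_weakly_sidorenko_generic_case_general p t l ht M hM a ha hab n hn
end

section
/- Let Φ be the system of two equations over 𝔽_p in nine variables: x₁ − x₂ + x₃ − x₄ = 0 and x₅ − x₆ + x₇ − x₈ + x₉ = 0. Then Φ is locally Sidorenko: for every α ∈ (0,1], setting ε = α/2, for all n ≥ 1 and all f : 𝔽_p^n → [−α, 1−α] with 𝔼_x f(x) = 0, one has T_Φ(α + εf) ≥ α^9. -/
open Finset

def M9 (p : ℕ) : Matrix (Fin 2) (Fin 9) (ZMod p) :=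
  !![1, -1, 1, -1, 0, 0, 0, 0, 0; 0, 0, 0, 0, 1, -1, 1, -1, 1]

private lemma sum_univ_nine' {M : Type*} [AddCommMonoid M] (f : Fin 9 → M) :
    ∑ i, f i = f 0 + f 1 + f 2 + f 3 + f 4 + f 5 + f 6 + f 7 + f 8 := by
  rw [Fin.sum_univ_castSucc, Fin.sum_univ_eight]
  rfl

private lemma prod_univ_nine' {M : Type*} [CommMonoid M] (f : Fin 9 → M) :
    ∏ i, f i = f 0 * f 1 * f 2 * f 3 * f 4 * f 5 * f 6 * f 7 * f 8 := by
  rw [Fin.prod_univ_castSucc, Fin.prod_univ_eight]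
  rfl

variable {p n : ℕ} [NeZero p]

lemma mem_kerSols_M9 (x : Fin 9 → Fin n → ZMod p) :
    x ∈ kerSols p n (M9 p) ↔ x 3 = x 0 - x 1 + x 2 ∧ x 8 = -(x 4) + x 5 - x 6 + x 7 := by
  simp only [kerSols, mem_filter, mem_univ, true_and, Fin.forall_fin_two, sum_univ_nine',
    show M9 p 0 0 = 1 from rfl, show M9 p 0 1 = -1 from rfl, show M9 p 0 2 = 1 from rfl,
    show M9 p 0 3 = -1 from rfl, show M9 p 0 4 = 0 from rfl, show M9 p 0 5 = 0 from rfl,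
    show M9 p 0 6 = 0 from rfl, show M9 p 0 7 = 0 from rfl, show M9 p 0 8 = 0 from rfl,
    show M9 p 1 0 = 0 from rfl, show M9 p 1 1 = 0 from rfl, show M9 p 1 2 = 0 from rfl,
    show M9 p 1 3 = 0 from rfl, show M9 p 1 4 = 1 from rfl, show M9 p 1 5 = -1 from rfl,
    show M9 p 1 6 = 1 from rfl, show M9 p 1 7 = -1 from rfl, show M9 p 1 8 = 1 from rfl,
    one_mul, zero_mul, neg_one_mul, add_zero, zero_add, funext_iff, Pi.add_apply,
    Pi.sub_apply, Pi.neg_apply]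
  constructor
  · rintro ⟨h1, h2⟩
    refine ⟨fun j => ?_, fun j => ?_⟩
    · linear_combination -h1 j
    · linear_combination h2 j
  · rintro ⟨h1, h2⟩
    refine ⟨fun j => ?_, fun j => ?_⟩
    · linear_combination -h1 j
    · linear_combination h2 j

private abbrev Gt (p n : ℕ) := Fin n → ZMod p

lemma ker_sum_eq (H : Gt p n → ℂ) :
    ∑ x ∈ kerSols p n (M9 p), ∏ i, H (x i)
      = (∑ z : Gt p n × Gt p n × Gt p n,
          H z.1 * H z.2.1 * H z.2.2 * H (z.1 - z.2.1 + z.2.2))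
        * (∑ w : Gt p n × Gt p n × Gt p n × Gt p n,
          H w.1 * H w.2.1 * H w.2.2.1 * H w.2.2.2
            * H (-w.1 + w.2.1 - w.2.2.1 + w.2.2.2)) := by
  have key : ∑ x ∈ kerSols p n (M9 p), ∏ i, H (x i)
      = ∑ y : (Gt p n × Gt p n × Gt p n) × (Gt p n × Gt p n × Gt p n × Gt p n),
        (H y.1.1 * H y.1.2.1 * H y.1.2.2 * H (y.1.1 - y.1.2.1 + y.1.2.2))
          * (H y.2.1 * H y.2.2.1 * H y.2.2.2.1 * H y.2.2.2.2
            * H (-y.2.1 + y.2.2.1 - y.2.2.2.1 + y.2.2.2.2)) := by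
    refine Finset.sum_nbij'
      (i := fun x => (((x 0, x 1, x 2), (x 4, x 5, x 6, x 7)) :
        (Gt p n × Gt p n × Gt p n) × (Gt p n × Gt p n × Gt p n × Gt p n)))
      (j := fun y => ![y.1.1, y.1.2.1, y.1.2.2, y.1.1 - y.1.2.1 + y.1.2.2,
        y.2.1, y.2.2.1, y.2.2.2.1, y.2.2.2.2,
        -y.2.1 + y.2.2.1 - y.2.2.2.1 + y.2.2.2.2])
      (fun x hx => mem_univ _)
      (fun y hy => ?_) (fun x hx => ?_) (fun y hy => ?_) (fun x hx => ?_)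
    · rw [mem_kerSols_M9]
      exact ⟨rfl, rfl⟩
    · obtain ⟨h3, h8⟩ := (mem_kerSols_M9 x).1 hx
      funext i
      fin_cases i <;> first | rfl | (exact h3.symm) | (exact h8.symm)
    · rfl
    · obtain ⟨h3, h8⟩ := (mem_kerSols_M9 x).1 hx
      rw [prod_univ_nine', h3, h8]
      ring
  rw [key, Fintype.sum_prod_type]
  simp only [← Finset.mul_sum]
  rw [← Finset.sum_mul]


section analytic

variable {G : Type*} [AddCommGroup G] [Fintype G]

private lemma sum_shift_sub (F : G → ℝ) (t : G) : ∑ a, F (t - a) = ∑ a, F a :=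
  Fintype.sum_equiv (Equiv.subLeft t) _ _ fun _ => rfl

private lemma sum_shift_sub' (F : G → ℝ) (t : G) : ∑ a, F (a - t) = ∑ a, F a :=
  Fintype.sum_equiv (Equiv.subRight t) _ _ fun _ => rfl

private lemma sum_shift_add (F : G → ℝ) (t : G) : ∑ a, F (t + a) = ∑ a, F a :=
  Fintype.sum_equiv (Equiv.addLeft t) _ _ fun _ => rfl

private lemma analytic_main (q : ℝ) (hq : 1 ≤ q) (hcard : (Fintype.card G : ℝ) = q)
    (α : ℝ) (hα0 : 0 < α) (hα1 : α ≤ 1) (g : G → ℝ) (hg : ∀ x, |g x| ≤ α / 2)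
    (hsum : ∑ x, g x = 0) :
    α ^ 9 * q ^ 7 ≤
      (∑ a, ∑ b, ∑ c, (α + g a) * (α + g b) * (α + g c) * (α + g (a - b + c)))
      * (∑ a, ∑ b, ∑ c, ∑ d, (α + g a) * (α + g b) * (α + g c) * (α + g d)
          * (α + g (-a + b - c + d))) := by
  set h : G → ℝ := fun x => α + g x with hh
  set σ2 : G → ℝ := fun s => ∑ a, g a * g (s - a) with hσ2
  set τ : G → ℝ := fun u => ∑ v, σ2 v * g (v - u) with hτ
  -- basic shift-vanishing facts
  have hgsub : ∀ t, ∑ a, g (t - a) = 0 := fun t => by rw [sum_shift_sub]; exact hsum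
  have hgsub' : ∀ t, ∑ a, g (a - t) = 0 := fun t => by rw [sum_shift_sub']; exact hsum
  -- sum of h
  have hhsum : ∑ a, h a = α * q := by
    simp only [hh, Finset.sum_add_distrib, hsum, add_zero, Finset.sum_const, card_univ,
      nsmul_eq_mul, mul_comm, hcard]
  -- P s := ∑_a h a * h (s - a) = α^2*q + σ2 s
  have hP : ∀ s, ∑ a, h a * h (s - a) = α ^ 2 * q + σ2 s := by
    intro s
    have e1 : ∀ a : G, h a * h (s - a)
        = α * α + α * g (s - a) + g a * α + g a * g (s - a) := by
      intro a; simp only [hh]; ring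
    rw [Finset.sum_congr rfl fun a _ => e1 a]
    rw [Finset.sum_add_distrib, Finset.sum_add_distrib, Finset.sum_add_distrib,
      ← Finset.mul_sum, ← Finset.mul_sum, ← Finset.sum_mul, hgsub s, hsum]
    simp only [Finset.sum_const, card_univ, nsmul_eq_mul, hcard, mul_zero, zero_mul,
      add_zero, zero_add, hσ2]
    ring
  -- sum of σ2 is zero
  have hσ2sum : ∑ s, σ2 s = 0 := by
    rw [hσ2]
    rw [Finset.sum_comm]
    simp only [← Finset.mul_sum]
    calc ∑ a, g a * ∑ s, g (s - a) = ∑ a, g a * 0 := by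
          refine Finset.sum_congr rfl fun a _ => ?_; rw [hgsub' a]
      _ = 0 := by simp
  -- sum of τ is zero and τ expansion
  have hτsum : ∀ u, ∑ v, h v * h (u - v) = α ^ 2 * q + σ2 u := hP
  -- S1
  have hS1 : (∑ a, ∑ b, ∑ c, h a * h b * h c * h (a - b + c))
      = ∑ s, (α ^ 2 * q + σ2 s) ^ 2 := by
    have e1 : ∀ a c : G, (∑ b, h b * h (a + c - b)) = α ^ 2 * q + σ2 (a + c) :=
      fun a c => hP (a + c)
    calc ∑ a, ∑ b, ∑ c, h a * h b * h c * h (a - b + c)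
        = ∑ a, ∑ c, (h a * h c) * (∑ b, h b * h (a + c - b)) := by
          rw [Finset.sum_congr rfl fun a _ => Finset.sum_comm]
          refine Finset.sum_congr rfl fun a _ => Finset.sum_congr rfl fun c _ => ?_
          rw [Finset.mul_sum]
          refine Finset.sum_congr rfl fun b _ => ?_
          have : a - b + c = a + c - b := by abel
          rw [this]; ring
      _ = ∑ a, ∑ c, (h a * h c) * (α ^ 2 * q + σ2 (a + c)) := by
          refine Finset.sum_congr rfl fun a _ => Finset.sum_congr rfl fun c _ => ?_
          rw [e1]
      _ = ∑ a, ∑ s, (h a * h (s - a)) * (α ^ 2 * q + σ2 s) := by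
          refine Finset.sum_congr rfl fun a _ => Fintype.sum_equiv (Equiv.addLeft a)
            (fun c => (h a * h c) * (α ^ 2 * q + σ2 (a + c)))
            (fun s => (h a * h (s - a)) * (α ^ 2 * q + σ2 s)) (fun c => ?_)
          simp [add_sub_cancel_left]
      _ = ∑ s, (∑ a, h a * h (s - a)) * (α ^ 2 * q + σ2 s) := by
          rw [Finset.sum_comm]
          refine Finset.sum_congr rfl fun s _ => ?_
          rw [Finset.sum_mul]
      _ = ∑ s, (α ^ 2 * q + σ2 s) ^ 2 := by
          refine Finset.sum_congr rfl fun s _ => ?_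
          rw [hP]; ring
  -- Q u := ∑_v (α^2 q + σ2 v) h (v - u) = α^3 q^2 + τ u
  have hQ : ∀ u, ∑ v, (α ^ 2 * q + σ2 v) * h (v - u) = α ^ 3 * q ^ 2 + τ u := by
    intro u
    have e1 : ∀ v : G, (α ^ 2 * q + σ2 v) * h (v - u)
        = (α ^ 2 * q) * α + (α ^ 2 * q) * g (v - u) + σ2 v * α + σ2 v * g (v - u) := by
      intro v; simp only [hh]; ring
    rw [Finset.sum_congr rfl fun v _ => e1 v]
    rw [Finset.sum_add_distrib, Finset.sum_add_distrib, Finset.sum_add_distrib,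
      ← Finset.mul_sum, ← Finset.mul_sum, sum_shift_sub' g u, hsum, ← Finset.sum_mul,
      hσ2sum]
    simp only [Finset.sum_const, card_univ, nsmul_eq_mul, hcard, mul_zero, zero_mul,
      add_zero, zero_add, hτ]
    ring
  -- S2
  have hS2 : (∑ a, ∑ b, ∑ c, ∑ d, h a * h b * h c * h d * h (-a + b - c + d))
      = ∑ u, (α ^ 2 * q + σ2 u) * (α ^ 3 * q ^ 2 + τ u) := by
    calc ∑ a, ∑ b, ∑ c, ∑ d, h a * h b * h c * h d * h (-a + b - c + d)
        = ∑ a, ∑ c, ∑ b, ∑ d, (h a * h c) * (h b * (h d * h (b + d - (a + c)))) := by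
          refine Finset.sum_congr rfl fun a _ => ?_
          rw [Finset.sum_comm]
          refine Finset.sum_congr rfl fun c _ => Finset.sum_congr rfl fun b _ =>
            Finset.sum_congr rfl fun d _ => ?_
          have : -a + b - c + d = b + d - (a + c) := by abel
          rw [this]; ring
      _ = ∑ a, ∑ c, ∑ b, ∑ v, (h a * h c) * (h b * (h (v - b) * h (v - (a + c)))) := by
          refine Finset.sum_congr rfl fun a _ => Finset.sum_congr rfl fun c _ =>
            Finset.sum_congr rfl fun b _ => Fintype.sum_equiv (Equiv.addLeft b)
              (fun d => (h a * h c) * (h b * (h d * h (b + d - (a + c)))))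
              (fun v => (h a * h c) * (h b * (h (v - b) * h (v - (a + c)))))
              fun d => by simp [add_sub_cancel_left]
      _ = ∑ a, ∑ c, ∑ v, (h a * h c) * ((∑ b, h b * h (v - b)) * h (v - (a + c))) := by
          refine Finset.sum_congr rfl fun a _ => Finset.sum_congr rfl fun c _ => ?_
          rw [Finset.sum_comm]
          refine Finset.sum_congr rfl fun v _ => ?_
          rw [Finset.sum_mul, Finset.mul_sum]
          refine Finset.sum_congr rfl fun b _ => by ring
      _ = ∑ a, ∑ c, (h a * h c) * (∑ v, (α ^ 2 * q + σ2 v) * h (v - (a + c))) := by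
          refine Finset.sum_congr rfl fun a _ => Finset.sum_congr rfl fun c _ => ?_
          rw [Finset.mul_sum]
          refine Finset.sum_congr rfl fun v _ => by rw [hP]
      _ = ∑ a, ∑ c, (h a * h c) * (α ^ 3 * q ^ 2 + τ (a + c)) := by
          refine Finset.sum_congr rfl fun a _ => Finset.sum_congr rfl fun c _ => by rw [hQ]
      _ = ∑ a, ∑ u, (h a * h (u - a)) * (α ^ 3 * q ^ 2 + τ u) := by
          refine Finset.sum_congr rfl fun a _ => Fintype.sum_equiv (Equiv.addLeft a)
            (fun c => (h a * h c) * (α ^ 3 * q ^ 2 + τ (a + c)))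
            (fun u => (h a * h (u - a)) * (α ^ 3 * q ^ 2 + τ u)) fun c => ?_
          simp [add_sub_cancel_left]
      _ = ∑ u, (∑ a, h a * h (u - a)) * (α ^ 3 * q ^ 2 + τ u) := by
          rw [Finset.sum_comm]
          exact Finset.sum_congr rfl fun u _ => (Finset.sum_mul _ _ _).symm
      _ = ∑ u, (α ^ 2 * q + σ2 u) * (α ^ 3 * q ^ 2 + τ u) := by
          exact Finset.sum_congr rfl fun u _ => by rw [hP]
  set A : ℝ := ∑ s, (σ2 s) ^ 2 with hA
  set R : ℝ := ∑ u, σ2 u * τ u with hR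
  have hτzero : ∑ u, τ u = 0 := by
    simp only [hτ]
    rw [Finset.sum_comm]
    calc ∑ v, ∑ u, σ2 v * g (v - u) = ∑ v, σ2 v * ∑ u, g (v - u) := by
          exact Finset.sum_congr rfl fun v _ => (Finset.mul_sum _ _ _).symm
      _ = 0 := by
          refine Finset.sum_eq_zero fun v _ => ?_
          rw [hgsub v, mul_zero]
  have hS1' : (∑ s, (α ^ 2 * q + σ2 s) ^ 2) = α ^ 4 * q ^ 3 + A := by
    have e1 : ∀ s : G, (α ^ 2 * q + σ2 s) ^ 2
        = α ^ 4 * q ^ 2 + (2 * (α ^ 2 * q)) * σ2 s + (σ2 s) ^ 2 := fun s => by ring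
    rw [Finset.sum_congr rfl fun s _ => e1 s, Finset.sum_add_distrib,
      Finset.sum_add_distrib, ← Finset.mul_sum, ← Finset.mul_sum, hσ2sum]
    simp only [Finset.sum_const, card_univ, nsmul_eq_mul, hcard, mul_zero, add_zero, hA]
    ring
  have hS2' : (∑ u, (α ^ 2 * q + σ2 u) * (α ^ 3 * q ^ 2 + τ u)) = α ^ 5 * q ^ 4 + R := by
    have e1 : ∀ u : G, (α ^ 2 * q + σ2 u) * (α ^ 3 * q ^ 2 + τ u)
        = α ^ 5 * q ^ 3 + (α ^ 2 * q) * τ u + (α ^ 3 * q ^ 2) * σ2 u + σ2 u * τ u :=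
      fun u => by ring
    rw [Finset.sum_congr rfl fun u _ => e1 u, Finset.sum_add_distrib,
      Finset.sum_add_distrib, Finset.sum_add_distrib, ← Finset.mul_sum, ← Finset.mul_sum,
      ← Finset.mul_sum, hτzero, hσ2sum]
    simp only [Finset.sum_const, card_univ, nsmul_eq_mul, hcard, mul_zero, add_zero, hR]
    ring
  -- bounds
  have hq0 : (0 : ℝ) < q := lt_of_lt_of_le one_pos hq
  have hA0 : 0 ≤ A := Finset.sum_nonneg fun s _ => sq_nonneg _
  have hσ2bound : ∀ s, |σ2 s| ≤ (α / 2) ^ 2 * q := by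
    intro s
    calc |σ2 s| ≤ ∑ a, |g a * g (s - a)| := Finset.abs_sum_le_sum_abs _ _
      _ ≤ ∑ _a : G, (α / 2) * (α / 2) := by
          refine Finset.sum_le_sum fun a _ => ?_
          rw [abs_mul]
          exact mul_le_mul (hg a) (hg _) (abs_nonneg _) (by positivity)
      _ = (α / 2) ^ 2 * q := by
          simp only [Finset.sum_const, card_univ, nsmul_eq_mul, hcard]; ring
  have hAle : A ≤ (α / 2) ^ 4 * q ^ 3 := by
    calc A ≤ ∑ _s : G, ((α / 2) ^ 2 * q) ^ 2 := by
          refine Finset.sum_le_sum fun s _ => ?_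
          rw [← sq_abs]
          exact pow_le_pow_left₀ (abs_nonneg _) (hσ2bound s) 2
      _ = (α / 2) ^ 4 * q ^ 3 := by
          simp only [Finset.sum_const, card_univ, nsmul_eq_mul, hcard]; ring
  have hGabs : ∀ t : G, (∑ v, |g (v - t)|) ≤ (α / 2) * q := by
    intro t
    rw [sum_shift_sub' (fun x => |g x|) t]
    calc ∑ x, |g x| ≤ ∑ _x : G, (α / 2) := Finset.sum_le_sum fun x _ => hg x
      _ = (α / 2) * q := by
          simp only [Finset.sum_const, card_univ, nsmul_eq_mul, hcard]; ring
  have hGabs' : ∀ t : G, (∑ v, |g (t - v)|) ≤ (α / 2) * q := by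
    intro t
    rw [sum_shift_sub (fun x => |g x|) t]
    calc ∑ x, |g x| ≤ ∑ _x : G, (α / 2) := Finset.sum_le_sum fun x _ => hg x
      _ = (α / 2) * q := by
          simp only [Finset.sum_const, card_univ, nsmul_eq_mul, hcard]; ring
  have hRabs : |R| ≤ ((α / 2) * q) * A := by
    have step1 : |R| ≤ ∑ u, ∑ v, |σ2 u| * |σ2 v| * |g (v - u)| := by
      calc |R| ≤ ∑ u, |σ2 u * τ u| := Finset.abs_sum_le_sum_abs _ _
        _ ≤ ∑ u, ∑ v, |σ2 u| * |σ2 v| * |g (v - u)| := by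
            refine Finset.sum_le_sum fun u _ => ?_
            rw [hτ]
            simp only []
            calc |σ2 u * ∑ v, σ2 v * g (v - u)| = |∑ v, σ2 u * (σ2 v * g (v - u))| := by
                  rw [← Finset.mul_sum]
              _ ≤ ∑ v, |σ2 u * (σ2 v * g (v - u))| := Finset.abs_sum_le_sum_abs _ _
              _ = ∑ v, |σ2 u| * |σ2 v| * |g (v - u)| := by
                  refine Finset.sum_congr rfl fun v _ => ?_
                  rw [abs_mul, abs_mul]; ring
    have step2 : ∑ u, ∑ v, |σ2 u| * |σ2 v| * |g (v - u)|
        ≤ ∑ u, ∑ v, ((σ2 u) ^ 2 / 2 + (σ2 v) ^ 2 / 2) * |g (v - u)| := by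
      refine Finset.sum_le_sum fun u _ => Finset.sum_le_sum fun v _ => ?_
      refine mul_le_mul_of_nonneg_right ?_ (abs_nonneg _)
      nlinarith [sq_nonneg (|σ2 u| - |σ2 v|), sq_abs (σ2 u), sq_abs (σ2 v),
        abs_nonneg (σ2 u), abs_nonneg (σ2 v)]
    have step3 : ∑ u, ∑ v, ((σ2 u) ^ 2 / 2) * |g (v - u)| ≤ ((α / 2) * q) * (A / 2) := by
      calc ∑ u, ∑ v, ((σ2 u) ^ 2 / 2) * |g (v - u)|
          = ∑ u, ((σ2 u) ^ 2 / 2) * ∑ v, |g (v - u)| := by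
            exact Finset.sum_congr rfl fun u _ => (Finset.mul_sum _ _ _).symm
        _ ≤ ∑ u, ((σ2 u) ^ 2 / 2) * ((α / 2) * q) := by
            refine Finset.sum_le_sum fun u _ => ?_
            exact mul_le_mul_of_nonneg_left (hGabs u) (by positivity)
        _ = ((α / 2) * q) * (A / 2) := by
            rw [← Finset.sum_mul, hA, ← Finset.sum_div]
            ring
    have step4 : ∑ u, ∑ v, ((σ2 v) ^ 2 / 2) * |g (v - u)| ≤ ((α / 2) * q) * (A / 2) := by
      rw [Finset.sum_comm]
      calc ∑ v, ∑ u, ((σ2 v) ^ 2 / 2) * |g (v - u)|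
          = ∑ v, ((σ2 v) ^ 2 / 2) * ∑ u, |g (v - u)| := by
            exact Finset.sum_congr rfl fun v _ => (Finset.mul_sum _ _ _).symm
        _ ≤ ∑ v, ((σ2 v) ^ 2 / 2) * ((α / 2) * q) := by
            refine Finset.sum_le_sum fun v _ => ?_
            exact mul_le_mul_of_nonneg_left (hGabs' v) (by positivity)
        _ = ((α / 2) * q) * (A / 2) := by
            rw [← Finset.sum_mul, hA, ← Finset.sum_div]
            ring
    have split : ∑ u, ∑ v, ((σ2 u) ^ 2 / 2 + (σ2 v) ^ 2 / 2) * |g (v - u)|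
        = (∑ u, ∑ v, ((σ2 u) ^ 2 / 2) * |g (v - u)|)
          + ∑ u, ∑ v, ((σ2 v) ^ 2 / 2) * |g (v - u)| := by
      rw [← Finset.sum_add_distrib]
      refine Finset.sum_congr rfl fun u _ => ?_
      rw [← Finset.sum_add_distrib]
      refine Finset.sum_congr rfl fun v _ => by ring
    calc |R| ≤ _ := step1
      _ ≤ _ := step2
      _ = _ := split
      _ ≤ ((α / 2) * q) * (A / 2) + ((α / 2) * q) * (A / 2) := add_le_add step3 step4
      _ = ((α / 2) * q) * A := by ring
  -- final assembly
  rw [hS1, hS2, hS1', hS2']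
  have hRlow : -(((α / 2) * q) * A) ≤ R := neg_le_of_abs_le hRabs
  nlinarith [mul_nonneg (mul_nonneg hA0 hq0.le) hα0.le,
    mul_nonneg hA0 hA0, mul_nonneg (mul_nonneg hA0 hq0.le) (le_of_lt hq0),
    mul_le_mul_of_nonneg_left hAle (mul_nonneg hα0.le hq0.le),
    mul_le_mul_of_nonneg_left hRlow (by positivity : (0:ℝ) ≤ α ^ 4 * q ^ 3 + A),
    pow_pos hq0 3, pow_pos hα0 5, sq_nonneg A]

end analytic


private lemma ker_card_eq : ((kerSols p n (M9 p)).card : ℂ)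
    = (Fintype.card (Gt p n) : ℂ) ^ 7 := by
  have h := ker_sum_eq (p := p) (n := n) (fun _ => (1 : ℂ))
  simp only [Finset.prod_const, one_pow, mul_one, Finset.sum_const, card_univ,
    Fintype.card_prod, nsmul_eq_mul, Nat.cast_mul] at h
  rw [h]
  push_cast
  ring

/-- The nine-variable system `Φ` is locally Sidorenko: for every `α ∈ (0,1]`, taking
`ε = α/2`, for all `n ≥ 1` and all `f : 𝔽_p^n → [−α, 1−α]` with mean zero one has
`T_Φ(α + εf) ≥ α⁹`. -/
theorem nine_variable_system_locally_sidorenko (p : ℕ) [Fact p.Prime]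
    (α : ℝ) (hα : α ∈ Set.Ioc (0 : ℝ) 1) (n : ℕ) (hn : 1 ≤ n)
    (f : (Fin n → ZMod p) → ℝ) (hf : ∀ x, f x ∈ Set.Icc (-α) (1 - α))
    (hmean : ∑ x : Fin n → ZMod p, f x = 0) :
    α ^ 9 ≤ (kerT p n (M9 p) (fun x => ((α + (α / 2) * f x : ℝ) : ℂ))).re := by
  obtain ⟨hα0, hα1⟩ := hα
  set N : ℕ := Fintype.card (Gt p n) with hN
  have hN0 : 0 < N := Fintype.card_pos
  have hNq : (1 : ℝ) ≤ (N : ℝ) := by exact_mod_cast hN0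
  -- the real numbers
  set S1 : ℝ := ∑ a, ∑ b, ∑ c, (α + (α / 2) * f a) * (α + (α / 2) * f b)
      * (α + (α / 2) * f c) * (α + (α / 2) * f (a - b + c)) with hS1
  set S2 : ℝ := ∑ a, ∑ b, ∑ c, ∑ d, (α + (α / 2) * f a) * (α + (α / 2) * f b)
      * (α + (α / 2) * f c) * (α + (α / 2) * f d)
      * (α + (α / 2) * f (-a + b - c + d)) with hS2
  have key : α ^ 9 * (N : ℝ) ^ 7 ≤ S1 * S2 := by
    refine analytic_main (N : ℝ) hNq rfl α hα0 hα1 (fun x => (α / 2) * f x) ?_ ?_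
    · intro x
      obtain ⟨hx1, hx2⟩ := hf x
      rw [abs_mul, abs_of_pos (by positivity : (0:ℝ) < α / 2)]
      have hfx : |f x| ≤ 1 := by
        rw [abs_le]
        constructor <;> nlinarith
      nlinarith [abs_nonneg (f x)]
    · rw [← Finset.mul_sum, hmean, mul_zero]
  -- the complex computation
  have hker := ker_sum_eq (p := p) (n := n) (fun x => ((α + (α / 2) * f x : ℝ) : ℂ))
  have hZ1 : (∑ z : Gt p n × Gt p n × Gt p n,
      ((α + (α / 2) * f z.1 : ℝ) : ℂ) * ((α + (α / 2) * f z.2.1 : ℝ) : ℂ)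
        * ((α + (α / 2) * f z.2.2 : ℝ) : ℂ)
        * ((α + (α / 2) * f (z.1 - z.2.1 + z.2.2) : ℝ) : ℂ)) = ((S1 : ℝ) : ℂ) := by
    rw [hS1]
    push_cast
    rw [Fintype.sum_prod_type]
    refine Finset.sum_congr rfl fun a _ => ?_
    rw [Fintype.sum_prod_type]
  have hZ2 : (∑ w : Gt p n × Gt p n × Gt p n × Gt p n,
      ((α + (α / 2) * f w.1 : ℝ) : ℂ) * ((α + (α / 2) * f w.2.1 : ℝ) : ℂ)
        * ((α + (α / 2) * f w.2.2.1 : ℝ) : ℂ) * ((α + (α / 2) * f w.2.2.2 : ℝ) : ℂ)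
        * ((α + (α / 2) * f (-w.1 + w.2.1 - w.2.2.1 + w.2.2.2) : ℝ) : ℂ))
      = ((S2 : ℝ) : ℂ) := by
    rw [hS2]
    push_cast
    rw [Fintype.sum_prod_type]
    refine Finset.sum_congr rfl fun a _ => ?_
    rw [Fintype.sum_prod_type]
    refine Finset.sum_congr rfl fun b _ => ?_
    rw [Fintype.sum_prod_type]
  have hT : kerT p n (M9 p) (fun x => ((α + (α / 2) * f x : ℝ) : ℂ))
      = ((S1 * S2 / (N : ℝ) ^ 7 : ℝ) : ℂ) := by
    rw [kerT, hker, hZ1, hZ2, ker_card_eq]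
    push_cast
    ring
  rw [hT, Complex.ofReal_re]
  exact (le_div_iff₀ (by positivity : (0:ℝ) < (N : ℝ) ^ 7)).2 key
end
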